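/- Suppose f : ℝ → ℂ is continuously differentiable with f, f′ ∈ L¹(ℝ) and |f(l)| ≤ C/(1+l²), |f′(l)| ≤ C/(1+l²). Then for every t > 0, |∫_{-∞}^{∞} e^{-itl²} f(l) dl| ≤ C′/√t for a constant C′ depending only on C. -/

import Mathlib

open MeasureTheory Set Filter Topology

/-!
Since the phase `l ↦ t l²` is even, the integral folds onto `(0, ∞)` against the even part
`g l = f l + f (-l)`. On `(0, δ)` the integrand is bounded by `2C`. On `(δ, ∞)` one integration
by parts against `d/dl e^{-itl²} = -2itl e^{-itl²}` gains a factor `1/(tl)`, leaving a boundary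
term and a remainder that are both `O(C/(tδ))`. The choice `δ = t^{-1/2}` balances the two
pieces and gives `C' = 5C`.
-/

noncomputable def chirp (t l : ℝ) : ℂ := Complex.exp (-Complex.I * t * l ^ 2)

theorem norm_chirp (t l : ℝ) : ‖chirp t l‖ = 1 := by
  rw [chirp, show -Complex.I * t * l ^ 2 = ((-(t * l ^ 2) : ℝ) : ℂ) * Complex.I by push_cast; ring,
    Complex.norm_exp_ofReal_mul_I]

@[fun_prop]
theorem continuous_chirp (t : ℝ) : Continuous (chirp t) := by
  unfold chirp; fun_prop

theorem chirp_neg (t l : ℝ) : chirp t (-l) = chirp t l := by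
  simp [chirp]

theorem hasDerivAt_chirp (t l : ℝ) :
    HasDerivAt (chirp t) (-2 * Complex.I * t * l * chirp t l) l := by
  have h : HasDerivAt (chirp t) _ l :=
    (((hasDerivAt_pow 2 (l : ℂ)).const_mul (-Complex.I * t)).comp_ofReal).cexp
  convert h using 1
  rw [chirp]
  push_cast
  ring

theorem nonneg_of_norm_le_div_one_add_sq {E : Type*} [SeminormedAddGroup E] {a : E} {C l : ℝ}
    (ha : ‖a‖ ≤ C / (1 + l ^ 2)) : 0 ≤ C := by
  have := (norm_nonneg a).trans ha
  rwa [le_div_iff₀ (by positivity), zero_mul] at this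

theorem norm_le_of_le_div_one_add_sq {E : Type*} [SeminormedAddGroup E] {a : E} {C l : ℝ}
    (ha : ‖a‖ ≤ C / (1 + l ^ 2)) : ‖a‖ ≤ C :=
  ha.trans (div_le_self (nonneg_of_norm_le_div_one_add_sq ha) (by nlinarith))

theorem norm_add_norm_comp_neg_le {E : Type*} [SeminormedAddGroup E] {f : ℝ → E} {C : ℝ}
    (hf : ∀ l, ‖f l‖ ≤ C / (1 + l ^ 2)) (l : ℝ) :
    ‖f l‖ + ‖f (-l)‖ ≤ 2 * C / (1 + l ^ 2) := by
  have := hf (-l)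
  rw [neg_sq] at this
  rw [two_mul, add_div]
  linarith [hf l]

theorem integrable_chirp_mul {f : ℝ → ℂ} {C : ℝ} (t : ℝ) (hf : Continuous f)
    (hfb : ∀ l, ‖f l‖ ≤ C / (1 + l ^ 2)) : Integrable fun l => chirp t l * f l :=
  (integrable_inv_one_add_sq.const_mul C).mono' ((continuous_chirp t).mul hf).aestronglyMeasurable
    (ae_of_all _ fun l => by simpa [norm_chirp, div_eq_mul_inv] using hfb l)

theorem deriv_add_comp_neg {E : Type*} [NormedAddCommGroup E] [NormedSpace ℝ E] {f : ℝ → E}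
    (hf : Differentiable ℝ f) (l : ℝ) :
    deriv (fun l => f l + f (-l)) l = deriv f l - deriv f (-l) := by
  have hneg : DifferentiableAt ℝ (fun x => f (-x)) l := (hf (-l)).comp l differentiableAt_id.neg
  rw [deriv_fun_add (hf l) hneg, deriv_comp_neg, sub_eq_add_neg]

theorem integral_eq_integral_Ioi_add_comp_neg {E : Type*} [NormedAddCommGroup E]
    [NormedSpace ℝ E] {F : ℝ → E} (hF : Integrable F) :
    ∫ x, F x = ∫ x in Ioi 0, (F x + F (-x)) := by
  rw [integral_add hF.integrableOn hF.comp_neg.integrableOn, integral_comp_neg_Ioi, neg_zero,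
    add_comm, intervalIntegral.integral_Iic_add_Ioi hF.integrableOn hF.integrableOn]

theorem norm_intervalIntegral_chirp_mul_le {f : ℝ → ℂ} {C : ℝ} (t δ : ℝ)
    (hfb : ∀ l, ‖f l‖ ≤ C / (1 + l ^ 2)) : ‖∫ l in 0..δ, chirp t l * f l‖ ≤ C * |δ| := by
  simpa using intervalIntegral.norm_integral_le_of_norm_le_const (a := 0) (b := δ)
    fun l _ => by simpa [norm_chirp] using norm_le_of_le_div_one_add_sq (hfb l)

theorem norm_div_sub_div_sq_le {a b : ℂ} {C x : ℝ} (hx : 0 < x) (ha : ‖a‖ ≤ C / (1 + x ^ 2))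
    (hb : ‖b‖ ≤ C / (1 + x ^ 2)) : ‖b / x - a / x ^ 2‖ ≤ 2 * C / x ^ 2 := by
  have hbx : ‖b‖ * x ≤ C := by
    calc ‖b‖ * x ≤ C / (1 + x ^ 2) * x := by gcongr
      _ ≤ C := by
        rw [div_mul_eq_mul_div, div_le_iff₀ (by positivity)]
        nlinarith [nonneg_of_norm_le_div_one_add_sq ha, sq_nonneg (x - 1)]
  calc ‖b / x - a / x ^ 2‖ ≤ ‖b‖ / x + ‖a‖ / x ^ 2 := by
        refine (norm_sub_le _ _).trans_eq ?_
        simp [abs_of_pos hx]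
    _ = (‖b‖ * x + ‖a‖) / x ^ 2 := by field_simp
    _ ≤ 2 * C / x ^ 2 := by
        gcongr
        linarith [norm_le_of_le_div_one_add_sq ha]

section HalfLine

variable {f : ℝ → ℂ} {C t : ℝ}

theorem hasDerivAt_chirp_mul_div {x : ℝ} (ht : t ≠ 0) (hx : x ≠ 0)
    (hf : DifferentiableAt ℝ f x) :
    HasDerivAt (fun y : ℝ => chirp t y * f y / (-2 * Complex.I * t * y))
      (chirp t x * f x + chirp t x * (deriv f x / x - f x / x ^ 2) / (-2 * Complex.I * t)) x := by
  have ht' : (t : ℂ) ≠ 0 := by exact_mod_cast ht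
  have hx' : (x : ℂ) ≠ 0 := by exact_mod_cast hx
  have hk : -2 * Complex.I * t * x ≠ 0 := by simp [ht', hx', Complex.I_ne_zero]
  have hlin : HasDerivAt (fun y : ℝ => -2 * Complex.I * t * (y : ℂ)) (-2 * Complex.I * t) x := by
    simpa using ((hasDerivAt_id (x : ℂ)).const_mul (-2 * Complex.I * t)).comp_ofReal
  refine (((hasDerivAt_chirp t x).mul hf.hasDerivAt).div hlin hk).congr_deriv ?_
  simp only [Pi.mul_apply]
  field_simp
  ring

theorem norm_chirp_mul_div (a : ℂ) {x : ℝ} (ht : 0 < t) (hx : 0 < x) :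
    ‖chirp t x * a / (-2 * Complex.I * t * x)‖ = ‖a‖ / (2 * t * x) := by
  simp [norm_chirp, abs_of_pos ht, abs_of_pos hx]

theorem norm_chirp_mul_div_sub_div_sq_le {a b : ℂ} {x : ℝ} (ha : ‖a‖ ≤ C / (1 + x ^ 2))
    (hb : ‖b‖ ≤ C / (1 + x ^ 2)) (ht : 0 < t) (hx : 0 < x) :
    ‖chirp t x * (b / x - a / x ^ 2) / (-2 * Complex.I * t)‖ ≤ C / t * x ^ (-2 : ℝ) :=
  calc ‖chirp t x * (b / x - a / x ^ 2) / (-2 * Complex.I * t)‖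
      = ‖b / x - a / x ^ 2‖ / (2 * t) := by simp [norm_chirp, abs_of_pos ht]
    _ ≤ 2 * C / x ^ 2 / (2 * t) := by gcongr; exact norm_div_sub_div_sq_le hx ha hb
    _ = C / t * x ^ (-2 : ℝ) := by
        rw [Real.rpow_neg hx.le, Real.rpow_two]
        field_simp

theorem tendsto_chirp_mul_div_atTop (hfb : ∀ l, ‖f l‖ ≤ C / (1 + l ^ 2)) (ht : 0 < t) :
    Tendsto (fun x : ℝ => chirp t x * f x / (-2 * Complex.I * t * x)) atTop (𝓝 0) := by
  have hlim : Tendsto (fun x : ℝ => C / (2 * t) * x⁻¹) atTop (𝓝 0) := by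
    simpa using tendsto_inv_atTop_zero.const_mul (C / (2 * t))
  refine squeeze_zero_norm' ?_ hlim
  filter_upwards [eventually_gt_atTop 0] with x hx
  calc ‖chirp t x * f x / (-2 * Complex.I * t * x)‖ = ‖f x‖ / (2 * t * x) :=
        norm_chirp_mul_div _ ht hx
    _ ≤ C / (2 * t * x) := by gcongr; exact norm_le_of_le_div_one_add_sq (hfb x)
    _ = C / (2 * t) * x⁻¹ := by field_simp

theorem norm_setIntegral_Ioi_chirp_mul_le {δ : ℝ} (hf : Differentiable ℝ f)
    (hfb : ∀ l, ‖f l‖ ≤ C / (1 + l ^ 2)) (hf'b : ∀ l, ‖deriv f l‖ ≤ C / (1 + l ^ 2))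
    (ht : 0 < t) (hδ : 0 < δ) :
    ‖∫ l in Ioi δ, chirp t l * f l‖ ≤ 3 * C / (2 * t * δ) := by
  set k : ℂ := -2 * Complex.I * t
  set G : ℝ → ℂ := fun x => chirp t x * f x / (k * x)
  set R : ℝ → ℂ := fun x => chirp t x * (deriv f x / x - f x / x ^ 2) / k
  have hR : ∀ x ∈ Ioi δ, ‖R x‖ ≤ C / t * x ^ (-2 : ℝ) := fun x hx =>
    norm_chirp_mul_div_sub_div_sq_le (hfb x) (hf'b x) ht (hδ.trans hx)
  have hdom : IntegrableOn (fun x : ℝ => C / t * x ^ (-2 : ℝ)) (Ioi δ) :=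
    (integrableOn_Ioi_rpow_of_lt (by norm_num) hδ).const_mul _
  have hRi : IntegrableOn R (Ioi δ) := by
    refine hdom.mono' ?_ ((ae_restrict_iff' measurableSet_Ioi).mpr (ae_of_all _ hR))
    have := measurable_deriv f
    have := hf.continuous.measurable
    have := (continuous_chirp t).measurable
    exact Measurable.aestronglyMeasurable (by simp only [R]; fun_prop)
  have hftc : ∫ x in Ioi δ, (chirp t x * f x + R x) = 0 - G δ :=
    integral_Ioi_of_hasDerivAt_of_tendsto'
      (fun x hx => hasDerivAt_chirp_mul_div ht.ne' (hδ.trans_le hx).ne' (hf x))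
      ((integrable_chirp_mul t hf.continuous hfb).integrableOn.add hRi)
      (tendsto_chirp_mul_div_atTop hfb ht)
  have hsplit : ∫ x in Ioi δ, chirp t x * f x = -(G δ + ∫ x in Ioi δ, R x) := by
    rw [integral_add (integrable_chirp_mul t hf.continuous hfb).integrableOn hRi] at hftc
    linear_combination hftc
  have hGδ : ‖G δ‖ ≤ C / (2 * t * δ) := by
    simp only [G, k]
    rw [norm_chirp_mul_div _ ht hδ]
    gcongr
    exact norm_le_of_le_div_one_add_sq (hfb δ)
  have hRint : ∫ x in Ioi δ, C / t * x ^ (-2 : ℝ) = C / (t * δ) := by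
    rw [integral_const_mul, integral_Ioi_rpow_of_lt (by norm_num) hδ,
      show (-2 : ℝ) + 1 = -1 by norm_num, Real.rpow_neg_one]
    field_simp
  calc ‖∫ x in Ioi δ, chirp t x * f x‖ = ‖G δ + ∫ x in Ioi δ, R x‖ := by rw [hsplit, norm_neg]
    _ ≤ C / (2 * t * δ) + C / (t * δ) := by
        refine norm_add_le_of_le hGδ (hRint ▸ norm_integral_le_of_norm_le hdom ?_)
        exact (ae_restrict_iff' measurableSet_Ioi).mpr (ae_of_all _ hR)
    _ = 3 * C / (2 * t * δ) := by field_simp; ring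

end HalfLine

/-- Stationary phase estimate: if `f` is `C¹` with `f, f′ ∈ L¹` and
`|f(l)|, |f′(l)| ≤ C/(1+l²)`, then `|∫ e^{-itl²} f(l) dl| ≤ C′/√t` for all
`t > 0`, with `C′` depending only on `C`. -/
theorem stationary_phase_estimate (C : ℝ) :
    ∃ C' : ℝ, ∀ f : ℝ → ℂ, ContDiff ℝ 1 f → Integrable f → Integrable (deriv f) →
      (∀ l : ℝ, ‖f l‖ ≤ C / (1 + l ^ 2)) →
      (∀ l : ℝ, ‖deriv f l‖ ≤ C / (1 + l ^ 2)) →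
      ∀ t : ℝ, 0 < t →
        ‖∫ l : ℝ, Complex.exp (-Complex.I * (t : ℂ) * (l : ℂ) ^ 2) * f l‖
          ≤ C' / Real.sqrt t := by
  refine ⟨5 * C, fun f hf _ _ hfb hf'b t ht => ?_⟩
  have hf₁ : Differentiable ℝ f := hf.differentiable one_ne_zero
  set g : ℝ → ℂ := fun l => f l + f (-l)
  have hg : Differentiable ℝ g := hf₁.add (hf₁.comp differentiable_neg)
  have hgb : ∀ l, ‖g l‖ ≤ 2 * C / (1 + l ^ 2) := fun l =>
    (norm_add_le _ _).trans (norm_add_norm_comp_neg_le hfb l)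
  have hg'b : ∀ l, ‖deriv g l‖ ≤ 2 * C / (1 + l ^ 2) := fun l => by
    rw [deriv_add_comp_neg hf₁]
    exact (norm_sub_le _ _).trans (norm_add_norm_comp_neg_le hf'b l)
  have hfold : ∫ l, chirp t l * f l = ∫ l in Ioi 0, chirp t l * g l := by
    rw [integral_eq_integral_Ioi_add_comp_neg (integrable_chirp_mul t hf₁.continuous hfb)]
    simp only [chirp_neg, g, mul_add]
  have hs : 0 < √t := Real.sqrt_pos.mpr ht
  set δ := (√t)⁻¹ with hδ_def
  have hδ : 0 < δ := inv_pos.mpr hs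
  have hgi := integrable_chirp_mul t hg.continuous hgb
  change ‖∫ l, chirp t l * f l‖ ≤ _
  rw [hfold, ← intervalIntegral.integral_interval_add_Ioi hgi.integrableOn hgi.integrableOn]
  calc _ ≤ 2 * C * |δ| + 3 * (2 * C) / (2 * t * δ) :=
        norm_add_le_of_le (norm_intervalIntegral_chirp_mul_le t δ hgb)
          (norm_setIntegral_Ioi_chirp_mul_le hg hgb hg'b ht hδ)
    _ = 5 * C / √t := by
        have hst : √t * √t = t := Real.mul_self_sqrt ht.le
        rw [abs_of_pos hδ, hδ_def]
        field_simp
        linear_combination 3 * C * hst
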